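/- Let n ≥ 1, let A ⊆ B ⊆ ℝ^n be finite sets, assume the vectors of A are linearly independent, and let R₁ ≥ 0 be an odd integer. Then Σ_{r=0}^{R₁} (−1)^r σ_r(A, B) ≤ 1_{{A = B}}. -/

import Mathlib

noncomputable section

/-- A finite set `Y` of vectors of `ℝⁿ` consists of linearly independent vectors. -/
def indepFinset {n : ℕ} (Y : Finset (Fin n → ℝ)) : Prop :=
  LinearIndependent ℝ (fun x : (Y : Set (Fin n → ℝ)) => (x : Fin n → ℝ))

/-- `rank X`: the dimension of the linear span of a finite set `X` of vectors of `ℝⁿ`. -/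
def rankOf {n : ℕ} (X : Finset (Fin n → ℝ)) : ℕ :=
  Module.finrank ℝ ↥(Submodule.span ℝ (X : Set (Fin n → ℝ)))

/-- The rank deficiency `δ(X) = |X| - rank X` of a finite set `X` of vectors of `ℝⁿ`. -/
def rankDef {n : ℕ} (X : Finset (Fin n → ℝ)) : ℕ :=
  X.card - rankOf X

/-- `σ_r(A, B)`: the number of subsets `Z ⊆ B \ A` with `|Z| = r` such that
`δ(A ∪ Z) ≤ 1` if `r` is odd, and `δ(A ∪ Z) = 0` if `r` is even. -/
def sigmaCount {n : ℕ} (r : ℕ) (A B : Finset (Fin n → ℝ)) : ℕ :=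
  (((B \ A).powersetCard r).filter fun Z =>
    rankDef (A ∪ Z) ≤ if Odd r then 1 else 0).card

/-!
Grouping the alternating sum by sets turns it into `Σ (-1)^|Z|` over the sets `Z ⊆ B \ A` with
`|Z| ≤ R₁` counted by some `σ_r`. If `A = B` only `Z = ∅` is counted. Otherwise fix `e ∈ B \ A`:
toggling `e` is a sign-reversing injection from the even counted sets into the odd ones. For even
`Z` the set `A ∪ Z` is independent; removing `e` keeps `δ = 0`, adding `e` raises `δ` by at most
one, and `|Z| < R₁` by parity. Hence the sum is at most `0`.
-/

open Finset

section RankDeficiency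

variable {n : ℕ}

lemma rankOf_le_card (X : Finset (Fin n → ℝ)) : rankOf X ≤ #X :=
  finrank_span_finset_le_card X

lemma rankOf_le_rankOf_add_card_sdiff {X Y : Finset (Fin n → ℝ)} (h : X ⊆ Y) :
    rankOf Y ≤ rankOf X + #(Y \ X) := by
  have hspan : Submodule.span ℝ (Y : Set (Fin n → ℝ)) = Submodule.span ℝ (X : Set _) ⊔
      Submodule.span ℝ ((Y \ X : Finset _) : Set (Fin n → ℝ)) := by
    rw [← Submodule.span_union, ← coe_union, union_sdiff_of_subset h]
  unfold rankOf
  rw [hspan]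
  exact (Submodule.finrank_add_le_finrank_add_finrank _ _).trans
    (Nat.add_le_add_left (rankOf_le_card _) _)

lemma rankDef_mono {X Y : Finset (Fin n → ℝ)} (h : X ⊆ Y) : rankDef X ≤ rankDef Y := by
  have := rankOf_le_rankOf_add_card_sdiff h
  have := card_sdiff_add_card_eq_card h
  have := rankOf_le_card X
  unfold rankDef
  omega

lemma rankDef_insert_le (X : Finset (Fin n → ℝ)) (e : Fin n → ℝ) :
    rankDef (insert e X) ≤ rankDef X + 1 := by
  have := rankOf_le_card X
  have := Submodule.finrank_mono (Submodule.span_mono (R := ℝ) (coe_subset.2 (subset_insert e X)))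
  have := card_insert_le e X
  unfold rankDef rankOf at *
  omega

lemma rankDef_eq_zero_of_indepFinset {X : Finset (Fin n → ℝ)} (h : indepFinset X) :
    rankDef X = 0 := by
  simp [rankDef, rankOf, finrank_span_finset_eq_card h]

end RankDeficiency

section Toggle

variable {α : Type*} [DecidableEq α]

lemma Finset.symmDiff_singleton_of_mem {Z : Finset α} {e : α} (he : e ∈ Z) :
    symmDiff Z {e} = Z.erase e := by
  ext x; by_cases hx : x = e <;> simp [mem_symmDiff, hx, he]

lemma Finset.symmDiff_singleton_of_notMem {Z : Finset α} {e : α} (he : e ∉ Z) :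
    symmDiff Z {e} = insert e Z := by
  ext x; by_cases hx : x = e <;> simp [mem_symmDiff, hx, he]

lemma Finset.even_card_symmDiff_singleton_iff (Z : Finset α) (e : α) :
    Even #(symmDiff Z {e}) ↔ ¬Even #Z := by
  by_cases he : e ∈ Z
  · have := card_pos.2 ⟨e, he⟩
    rw [symmDiff_singleton_of_mem he, card_erase_of_mem he, Nat.even_sub' this]
    simp
  · rw [symmDiff_singleton_of_notMem he, card_insert_of_notMem he, Nat.even_add_one]

theorem sum_neg_one_pow_card_nonpos {S : Finset (Finset α)} (e : α)
    (h : ∀ Z ∈ S, Even #Z → symmDiff Z {e} ∈ S) : ∑ Z ∈ S, (-1 : ℝ) ^ #Z ≤ 0 := by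
  have hle : #{Z ∈ S | Even #Z} ≤ #{Z ∈ S | ¬Even #Z} := by
    refine card_le_card_of_injOn (fun Z => symmDiff Z {e}) (fun Z hZ => ?_)
      (symmDiff_left_injective _).injOn
    obtain ⟨hZS, hZ⟩ := mem_filter.1 hZ
    exact mem_filter.2 ⟨h Z hZS hZ, by rwa [even_card_symmDiff_singleton_iff, not_not]⟩
  rw [← sum_filter_add_sum_filter_not S (fun Z => Even #Z),
    sum_congr rfl fun Z hZ => (mem_filter.1 hZ).2.neg_one_pow,
    sum_congr rfl fun Z hZ => (Nat.not_even_iff_odd.1 (mem_filter.1 hZ).2).neg_one_pow]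
  simp only [sum_const, nsmul_eq_mul, mul_one, mul_neg]
  have : (#{Z ∈ S | Even #Z} : ℝ) ≤ #{Z ∈ S | ¬Even #Z} := by exact_mod_cast hle
  linarith

end Toggle

section SigmaSets

variable {n : ℕ}

def sigmaSets (A B : Finset (Fin n → ℝ)) (R : ℕ) : Finset (Finset (Fin n → ℝ)) :=
  (B \ A).powerset.filter fun Z => #Z ≤ R ∧ rankDef (A ∪ Z) ≤ if Odd #Z then 1 else 0

lemma filter_card_sigmaSets_eq {A B : Finset (Fin n → ℝ)} {R r : ℕ} (hr : r ≤ R) :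
    {Z ∈ sigmaSets A B R | #Z = r} =
      ((B \ A).powersetCard r).filter fun Z => rankDef (A ∪ Z) ≤ if Odd r then 1 else 0 := by
  ext Z
  simp only [sigmaSets, mem_filter, mem_powerset, mem_powersetCard]
  constructor
  · rintro ⟨⟨hZ, -, hrank⟩, rfl⟩
    exact ⟨⟨hZ, rfl⟩, hrank⟩
  · rintro ⟨⟨hZ, rfl⟩, hrank⟩
    exact ⟨⟨hZ, hr, hrank⟩, rfl⟩

lemma sum_range_sigmaCount (A B : Finset (Fin n → ℝ)) (R : ℕ) :
    ∑ r ∈ range (R + 1), (-1 : ℝ) ^ r * (sigmaCount r A B : ℝ) =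
      ∑ Z ∈ sigmaSets A B R, (-1 : ℝ) ^ #Z := by
  rw [← sum_fiberwise_of_maps_to (g := card) (t := range (R + 1))
    fun Z hZ => mem_range_succ_iff.2 (mem_filter.1 hZ).2.1]
  refine sum_congr rfl fun r hr => ?_
  rw [sum_congr rfl fun Z hZ => congrArg _ (mem_filter.1 hZ).2, sum_const, nsmul_eq_mul,
    filter_card_sigmaSets_eq (mem_range_succ_iff.1 hr), sigmaCount, mul_comm]

lemma sigmaSets_self {A : Finset (Fin n → ℝ)} (hA : indepFinset A) (R : ℕ) :
    sigmaSets A A R = {∅} := by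
  ext Z
  simp only [sigmaSets, mem_filter, mem_powerset, sdiff_self, bot_eq_empty, subset_empty,
    mem_singleton]
  refine ⟨fun h => h.1, ?_⟩
  rintro rfl
  simp [rankDef_eq_zero_of_indepFinset hA]

lemma symmDiff_singleton_mem_sigmaSets {A B Z : Finset (Fin n → ℝ)} {R : ℕ} {e : Fin n → ℝ}
    (hR : Odd R) (he : e ∈ B \ A) (hZ : Z ∈ sigmaSets A B R) (hZeven : Even #Z) :
    symmDiff Z {e} ∈ sigmaSets A B R := by
  simp only [sigmaSets, mem_filter, mem_powerset] at hZ ⊢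
  obtain ⟨hZD, hZR, hrank⟩ := hZ
  have hrank0 : rankDef (A ∪ Z) = 0 := by
    simpa [Nat.not_odd_iff_even.2 hZeven] using hrank
  have hodd : Odd #(symmDiff Z {e}) := by
    rw [← Nat.not_even_iff_odd, even_card_symmDiff_singleton_iff, not_not]; exact hZeven
  rw [if_pos hodd]
  by_cases heZ : e ∈ Z
  · rw [symmDiff_singleton_of_mem heZ]
    refine ⟨(erase_subset e Z).trans hZD, (card_erase_le).trans hZR, ?_⟩
    exact (rankDef_mono (union_subset_union_right (erase_subset e Z))).trans (by omega)
  · rw [symmDiff_singleton_of_notMem heZ]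
    -- `#Z` is even and `R` odd, so `#Z < R` leaves room for `e`.
    have hZR' : #Z < R := lt_of_le_of_ne hZR fun h => Nat.not_even_iff_odd.2 hR (h ▸ hZeven)
    refine ⟨insert_subset he hZD, (card_insert_le e Z).trans hZR', ?_⟩
    rw [union_insert]
    exact (rankDef_insert_le _ e).trans (by omega)

end SigmaSets

theorem sieve_sigma_lower_general
    (n : ℕ)
    (A B : Finset (Fin n → ℝ)) (hAB : A ⊆ B) (hA : indepFinset A)
    (R₁ : ℕ) (hR₁ : Odd R₁) :
    ∑ r ∈ Finset.range (R₁ + 1), (-1 : ℝ) ^ r * (sigmaCount r A B : ℝ)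
      ≤ (if A = B then 1 else 0) := by
  rw [sum_range_sigmaCount]
  split_ifs with hAeqB
  · subst hAeqB
    simp [sigmaSets_self hA]
  · obtain ⟨e, heB, heA⟩ := exists_of_ssubset (hAB.lt_of_ne hAeqB)
    exact sum_neg_one_pow_card_nonpos e fun Z hZ hZeven =>
      symmDiff_singleton_mem_sigmaSets hR₁ (mem_sdiff.2 ⟨heB, heA⟩) hZ hZeven

/-- **Lemma 3.2, lower bound.** If `A ⊆ B ⊆ ℝⁿ` are finite, `A` consists of linearly
independent vectors, and `R₁ ≥ 0` is odd, then
`Σ_{r=0}^{R₁} (-1)ʳ σ_r(A, B) ≤ 1_{A = B}`. -/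
theorem sieve_sigma_lower
    (n : ℕ) (hn : 1 ≤ n)
    (A B : Finset (Fin n → ℝ)) (hAB : A ⊆ B) (hA : indepFinset A)
    (R₁ : ℕ) (hR₁ : Odd R₁) :
    ∑ r ∈ Finset.range (R₁ + 1), (-1 : ℝ) ^ r * (sigmaCount r A B : ℝ)
      ≤ (if A = B then 1 else 0) :=
  sieve_sigma_lower_general n A B hAB hA R₁ hR₁
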